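/- arXiv:1911.11837 — 2 statements merged into one kernel-verified Lean document; each statement's English description precedes it below -/
import Mathlib

section
/- If a data subcomplex satisfies the strong join condition, then it is closed under permutations: for any (T, τ) in the subcomplex and any permutation ς of the index set of T, the correspondingly permuted data table (T∘ς, ς·τ) also lies in the subcomplex. -/
open MeasureTheory
open scoped ENNReal

variable (A : Type*) (Val : A → Type*) [∀ a, MeasurableSpace (Val a)]

/-- A data table: a finite attribute list `T : Fin n → A` together with a measure on the
product of the corresponding value spaces.  (The level `n` is the length of the list;
`n = 0` is the empty list, whose value space is a singleton.) -/
def DT : Type _ := Σ n : ℕ, Σ T : Fin n → A, Measure (∀ k, Val (T k))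

/-- Face map `d_i`: delete the `i`-th attribute and marginalize the measure. -/
noncomputable def face {n : ℕ} (T : Fin (n+1) → A) (i : Fin (n+1))
    (τ : Measure (∀ k, Val (T k))) : Measure (∀ k : Fin n, Val (T (i.succAbove k))) :=
  τ.map fun x k => x (i.succAbove k)

/-- Degeneracy map `s_i`: repeat the `i`-th attribute and push the measure forward along
the diagonal duplication (Dirac diagonal). -/
noncomputable def degen {n : ℕ} (T : Fin n → A) (i : Fin n)
    (τ : Measure (∀ k, Val (T k))) : Measure (∀ k : Fin (n+1), Val (T (i.predAbove k))) :=
  τ.map fun x k => x (i.predAbove k)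

/-- Reduction (marginalization) along an attribute inclusion `ι`. -/
noncomputable def red {m n : ℕ} (T : Fin n → A) (ι : Fin m → Fin n)
    (τ : Measure (∀ k, Val (T k))) : Measure (∀ k : Fin m, Val (T (ι k))) :=
  τ.map fun x k => x (ι k)

/-- A data subcomplex: a collection of data tables closed under the face
(marginalization) and degeneracy (diagonal) maps. -/
def IsSubcomplex (S : Set (DT A Val)) : Prop :=
  (∀ (n : ℕ) (T : Fin (n+1) → A) (τ : Measure (∀ k, Val (T k))) (i : Fin (n+1)),
      ⟨n+1, T, τ⟩ ∈ S → ⟨n, T ∘ i.succAbove, face A Val T i τ⟩ ∈ S) ∧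
  (∀ (n : ℕ) (T : Fin n → A) (τ : Measure (∀ k, Val (T k))) (i : Fin n),
      ⟨n, T, τ⟩ ∈ S → ⟨n+1, T ∘ i.predAbove, degen A Val T i τ⟩ ∈ S)

/-- The combinatorial data of a merge of two attribute inclusions
`ι01 : T₀ ↪ T₀₁`, `ι02 : T₀ ↪ T₀₂` into a common list of length `n012`: order-preserving
inclusions of the two lists whose images cover the merged index set, agree on the common
sublist, and overlap exactly in it. -/
structure MergeTop (n0 n01 n02 n012 : ℕ)
    (ι01 : Fin n0 → Fin n01) (ι02 : Fin n0 → Fin n02) : Type where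
  μ01 : Fin n01 → Fin n012
  μ02 : Fin n02 → Fin n012
  mono01 : StrictMono μ01
  mono02 : StrictMono μ02
  comm : μ01 ∘ ι01 = μ02 ∘ ι02
  cover : Set.range μ01 ∪ Set.range μ02 = Set.univ
  inter : Set.range μ01 ∩ Set.range μ02 = Set.range (μ01 ∘ ι01)

/-- The strong join condition: for every pair of member tables that are well-aligned along
a common sublist (their reductions to it agree), *every* join of them — every measure on a
merged list reducing to the two given measures — is again a member. -/
def StrongJoinCondition (S : Set (DT A Val)) : Prop :=
  ∀ {n0 n01 n02 n012 : ℕ} (ι01 : Fin n0 → Fin n01) (ι02 : Fin n0 → Fin n02),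
    StrictMono ι01 → StrictMono ι02 →
    ∀ (M : MergeTop n0 n01 n02 n012 ι01 ι02) (T012 : Fin n012 → A)
      (τ01 : Measure (∀ k : Fin n01, Val (T012 (M.μ01 k))))
      (τ02 : Measure (∀ k : Fin n02, Val (T012 (M.μ02 k)))),
      ⟨n01, T012 ∘ M.μ01, τ01⟩ ∈ S → ⟨n02, T012 ∘ M.μ02, τ02⟩ ∈ S →
      HEq (red A Val (T012 ∘ M.μ01) ι01 τ01) (red A Val (T012 ∘ M.μ02) ι02 τ02) →
      ∀ τ012 : Measure (∀ k, Val (T012 k)),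
        red A Val T012 M.μ01 τ012 = τ01 → red A Val T012 M.μ02 τ012 = τ02 →
        ⟨n012, T012, τ012⟩ ∈ S

/-! With empty overlap, the strong join condition says that every coupling of two member
tables is a member. Coupling a table with itself along the diagonal, repeatedly, shows that
the list `T` written out `l` times, carrying the pushforward of `τ` under the diagonal, is a
member. Reading the attribute `f k` off the `k`-th copy picks strictly increasing positions,
so any reindexed table `(T ∘ f, red f τ)`, in particular a permuted one, is an iterated face
of that repetition. -/

section

variable {A Val}

lemma measurable_reindex {l n : ℕ} (T : Fin n → A) (f : Fin l → Fin n) :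
    Measurable fun (x : ∀ k, Val (T k)) (k : Fin l) => x (f k) :=
  measurable_pi_lambda _ fun k => measurable_pi_apply (f k)

lemma red_id {n : ℕ} (T : Fin n → A) (τ : Measure (∀ k, Val (T k))) :
    red A Val T id τ = τ :=
  Measure.map_id

lemma red_red {l m n : ℕ} (T : Fin n → A) (f : Fin m → Fin n) (g : Fin l → Fin m)
    (τ : Measure (∀ k, Val (T k))) :
    red A Val (T ∘ f) g (red A Val T f τ) = red A Val T (f ∘ g) τ :=
  Measure.map_map (measurable_reindex (T ∘ f) g) (measurable_reindex T f)

lemma red_heq_of_eq {l n : ℕ} (T : Fin n → A) {f g : Fin l → Fin n} (h : f = g)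
    (τ : Measure (∀ k, Val (T k))) : HEq (red A Val T f τ) (red A Val T g τ) := by
  subst h; rfl

lemma strictMono_eq_id_of_surjective {n : ℕ} {p : Fin n → Fin n} (hp : StrictMono p)
    (hs : Function.Surjective p) : p = id :=
  funext fun k => Fin.ext (Fin.coe_orderIso_apply (hp.orderIsoOfSurjective p hs) k)

variable {S : Set (DT A Val)}

lemma mem_red_red_iff {l m n : ℕ} {T : Fin n → A} {τ : Measure (∀ k, Val (T k))}
    {f : Fin m → Fin n} {g : Fin l → Fin m} {h : Fin l → Fin n} (hfg : f ∘ g = h) :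
    ⟨l, (T ∘ f) ∘ g, red A Val (T ∘ f) g (red A Val T f τ)⟩ ∈ S ↔
      ⟨l, T ∘ h, red A Val T h τ⟩ ∈ S := by
  subst hfg; rw [red_red]; rfl

lemma mem_red_of_surjective {m l : ℕ} {p : Fin l → Fin m} (hp : StrictMono p)
    (hs : Function.Surjective p) {T : Fin m → A} {τ : Measure (∀ k, Val (T k))}
    (h : ⟨m, T, τ⟩ ∈ S) : ⟨l, T ∘ p, red A Val T p τ⟩ ∈ S := by
  obtain rfl : l = m := Fin.equiv_iff_eq.mp ⟨Equiv.ofBijective p ⟨hp.injective, hs⟩⟩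
  obtain rfl := strictMono_eq_id_of_surjective hp hs
  rwa [red_id]

theorem IsSubcomplex.red_mem_of_strictMono (hsub : IsSubcomplex A Val S) {m l : ℕ}
    {p : Fin l → Fin m} (hp : StrictMono p) {T : Fin m → A} {τ : Measure (∀ k, Val (T k))}
    (h : ⟨m, T, τ⟩ ∈ S) : ⟨l, T ∘ p, red A Val T p τ⟩ ∈ S := by
  induction m generalizing l with
  | zero => exact mem_red_of_surjective hp (fun k => k.elim0) h
  | succ m ih =>
    by_cases hs : Function.Surjective p
    · exact mem_red_of_surjective hp hs h
    obtain ⟨i, hi⟩ : ∃ i, ∀ k, p k ≠ i := by simpa [Function.Surjective] using hs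
    choose q hq using fun k => Fin.exists_succAbove_eq (hi k)
    have hq_mono : StrictMono q := fun a b hab => by
      have := hp hab
      rwa [← hq a, ← hq b, Fin.succAbove_lt_succAbove_iff] at this
    have hface : ⟨m, T ∘ i.succAbove, red A Val T i.succAbove τ⟩ ∈ S := hsub.1 m T τ i h
    exact (mem_red_red_iff (funext hq)).1 (ih hq_mono hface)

def MergeTop.append (a b : ℕ) :
    MergeTop 0 a b (a + b) (Fin.elim0 : Fin 0 → Fin a) (Fin.elim0 : Fin 0 → Fin b) where
  μ01 := Fin.castAdd b
  μ02 := Fin.natAdd a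
  mono01 := Fin.strictMono_castAdd b
  mono02 := Fin.strictMono_natAdd a
  comm := Subsingleton.elim _ _
  cover := Set.eq_univ_of_forall fun j =>
    Fin.addCases (fun i => Or.inl ⟨i, rfl⟩) (fun i => Or.inr ⟨i, rfl⟩) j
  inter := by
    rw [Set.range_eq_empty (Fin.castAdd b ∘ Fin.elim0), Set.eq_empty_iff_forall_notMem]
    rintro _ ⟨⟨i, rfl⟩, ⟨j, hj⟩⟩
    have := congrArg Fin.val hj
    simp only [Fin.val_natAdd, Fin.val_castAdd] at this
    omega

theorem StrongJoinCondition.mem_of_mem_red_castAdd_of_mem_red_natAdd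
    (hstrong : StrongJoinCondition A Val S) {a b : ℕ} {T : Fin (a + b) → A}
    {τ : Measure (∀ k, Val (T k))}
    (h₁ : ⟨a, T ∘ Fin.castAdd b, red A Val T (Fin.castAdd b) τ⟩ ∈ S)
    (h₂ : ⟨b, T ∘ Fin.natAdd a, red A Val T (Fin.natAdd a) τ⟩ ∈ S) : ⟨a + b, T, τ⟩ ∈ S :=
  hstrong _ _ (Subsingleton.strictMono _) (Subsingleton.strictMono _) (MergeTop.append a b)
    T _ _ h₁ h₂
    ((heq_of_eq (red_red T _ _ τ)).trans
      ((red_heq_of_eq T (Subsingleton.elim _ _) τ).trans (heq_of_eq (red_red T _ _ τ).symm)))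
    τ rfl rfl

/-- The length is `n * m`, not `m * n`, because `n * (m + 1)` unfolds to `n * m + n`: the
`(m + 1)`-st copy is then the `Fin.natAdd` block of `Fin (n * m + n)`. -/
def repeatIdx (n m : ℕ) (j : Fin (n * m)) : Fin n :=
  ⟨j % n, Nat.mod_lt _ (Nat.pos_of_ne_zero fun hn => by simpa [hn] using j.isLt)⟩

lemma repeatIdx_succ_comp_castAdd (n m : ℕ) :
    repeatIdx n (m + 1) ∘ Fin.castAdd n = repeatIdx n m :=
  rfl

lemma repeatIdx_succ_comp_natAdd (n m : ℕ) : repeatIdx n (m + 1) ∘ Fin.natAdd (n * m) = id :=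
  funext fun k => Fin.ext <| by simpa [repeatIdx] using Nat.mod_eq_of_lt k.isLt

def copySelect {l n : ℕ} (f : Fin l → Fin n) (k : Fin l) : Fin (n * l) :=
  ⟨n * k + f k, by nlinarith [(f k).isLt, k.isLt]⟩

lemma copySelect_strictMono {l n : ℕ} (f : Fin l → Fin n) : StrictMono (copySelect f) :=
  fun a b hab => by
    have : (a : ℕ) + 1 ≤ b := hab
    simp only [copySelect, Fin.mk_lt_mk]
    nlinarith [(f a).isLt]

lemma repeatIdx_comp_copySelect {l n : ℕ} (f : Fin l → Fin n) :
    repeatIdx n l ∘ copySelect f = f :=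
  funext fun k => Fin.ext <| by simpa [repeatIdx, copySelect] using Nat.mod_eq_of_lt (f k).isLt

theorem StrongJoinCondition.mem_red_repeatIdx (hstrong : StrongJoinCondition A Val S)
    (hsub : IsSubcomplex A Val S) {n : ℕ} {T : Fin n → A} {τ : Measure (∀ k, Val (T k))}
    (h : ⟨n, T, τ⟩ ∈ S) (m : ℕ) :
    ⟨n * m, T ∘ repeatIdx n m, red A Val T (repeatIdx n m) τ⟩ ∈ S := by
  induction m with
  | zero => exact hsub.red_mem_of_strictMono (fun {a} => absurd a.isLt (by simp)) h
  | succ m ih =>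
    refine hstrong.mem_of_mem_red_castAdd_of_mem_red_natAdd ?_ ?_
    · exact (mem_red_red_iff (repeatIdx_succ_comp_castAdd n m)).2 ih
    · exact (mem_red_red_iff (repeatIdx_succ_comp_natAdd n m)).2 (by rwa [red_id])

theorem StrongJoinCondition.red_mem (hstrong : StrongJoinCondition A Val S)
    (hsub : IsSubcomplex A Val S) {l n : ℕ} (f : Fin l → Fin n) {T : Fin n → A}
    {τ : Measure (∀ k, Val (T k))} (h : ⟨n, T, τ⟩ ∈ S) :
    ⟨l, T ∘ f, red A Val T f τ⟩ ∈ S :=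
  (mem_red_red_iff (repeatIdx_comp_copySelect f)).1
    (hsub.red_mem_of_strictMono (copySelect_strictMono f) (hstrong.mem_red_repeatIdx hsub h l))

end

theorem strong_join_closed_under_permutation
    (S : Set (DT A Val)) (hsub : IsSubcomplex A Val S)
    (hstrong : StrongJoinCondition A Val S) :
    ∀ (n : ℕ) (T : Fin n → A) (τ : Measure (∀ k, Val (T k))),
      ⟨n, T, τ⟩ ∈ S → ∀ ς : Equiv.Perm (Fin n),
        ⟨n, T ∘ ς, τ.map fun x k => x (ς k)⟩ ∈ S :=
  fun _ _ _ h ς => hstrong.red_mem hsub ς h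
end

section
/- For every threshold t ∈ [0, ∞], the complex of approximate joins F^t is a data subcomplex (closed under faces and degeneracies) and satisfies the strong join condition; moreover F^{t₁} ⊆ F^{t₂} whenever t₁ ≤ t₂, F⁰ is the complex of perfect joins, and F^∞ is the ambient complex. -/
open MeasureTheory
open scoped ENNReal

variable (A : Type*) (Val : A → Type*) [∀ a, MeasurableSpace (Val a)]

/-- The complex of perfect joins F⁰ of a data subcomplex `S`: all tables `(T,τ)` such
that every entry of `T` is contained in some sublist `S' ↪ T` for which the reduction of
`τ` to `S'` is a member of `S`. -/
def PerfectJoins (S : Set (DT A Val)) : Set (DT A Val) :=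
  {x | ∀ i : Fin x.1, ∃ (m : ℕ) (ι : Fin m → Fin x.1),
        StrictMono ι ∧ i ∈ Set.range ι ∧
        ⟨m, x.2.1 ∘ ι, red A Val x.2.1 ι x.2.2⟩ ∈ S}

/-- Wasserstein-1 distance with the L^∞ (sup) ground metric on a finite product. -/
noncomputable def wass {ι : Type*} [Fintype ι] (E : ι → Type*) [∀ i, MetricSpace (E i)]
    [∀ i, MeasurableSpace (E i)] (μ1 μ2 : Measure (∀ i, E i)) : ℝ≥0∞ :=
  ⨅ μ ∈ {μ : Measure ((∀ i, E i) × (∀ i, E i)) |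
      μ.map Prod.fst = μ1 ∧ μ.map Prod.snd = μ2},
    ∫⁻ p, ENNReal.ofReal (dist p.1 p.2) ∂μ

/-- The complex of approximate joins F^t of a data subcomplex `S`: all tables `(T,τ)`
such that every entry of `T` is contained in some sublist `S' ↪ T` carrying a member
table `(S',σ)` of `S` with `w_{S'}(red_{S'} τ, σ) ≤ t`. -/
def ApproxJoins [∀ a, MetricSpace (Val a)] (S : Set (DT A Val)) (t : ℝ≥0∞) :
    Set (DT A Val) :=
  {x | ∀ i : Fin x.1, ∃ (m : ℕ) (ι : Fin m → Fin x.1)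
        (σ : Measure (∀ k : Fin m, Val (x.2.1 (ι k)))),
        StrictMono ι ∧ i ∈ Set.range ι ∧ ⟨m, x.2.1 ∘ ι, σ⟩ ∈ S ∧
        wass (fun k : Fin m => Val (x.2.1 (ι k))) (red A Val x.2.1 ι x.2.2) σ ≤ t}

/-!
Faces do not increase the Wasserstein distance and `S` is closed under faces, so the sublist
witnessing an entry in the definition of `F^t` can always be shrunk to that single entry:
membership in `F^t` is a condition on the one-attribute marginals of `τ` alone. Such a condition
is stable under every reindexing of the attribute list (faces and degeneracies) and under joins,
since every entry of a join already lies in one of the two joined tables.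

For `F^0`: a coupling of `μ` and `ν` of cost below `δ r` moves mass at most `δ` farther than `r`,
so `μ C ≤ ν (thickening r C) + δ`; letting `r → 0` gives `μ C ≤ ν C` on closed sets, and finite
Borel measures on a second countable metric space agreeing on closed sets are equal.
-/

section Wasserstein

variable {ι : Type*} [Fintype ι] {E : ι → Type*} [∀ i, MetricSpace (E i)]
  [∀ i, MeasurableSpace (E i)]

lemma wass_map_restrict_le {ι' : Type*} [Fintype ι'] (κ : ι' → ι) (μ ν : Measure (∀ i, E i)) :
    wass (fun k => E (κ k)) (μ.map fun x k => x (κ k)) (ν.map fun x k => x (κ k))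
      ≤ wass E μ ν := by
  have hκ : Measurable fun (x : ∀ i, E i) k => x (κ k) :=
    measurable_pi_lambda _ fun k => measurable_pi_apply (κ k)
  refine le_iInf₂ fun γ ⟨hγ₁, hγ₂⟩ => ?_
  refine iInf₂_le_of_le (γ.map (Prod.map (fun x k => x (κ k)) fun x k => x (κ k)))
    ⟨?_, ?_⟩ ?_
  · rw [Measure.map_map measurable_fst (hκ.prodMap hκ), ← hγ₁, Measure.map_map hκ measurable_fst]
    rfl
  · rw [Measure.map_map measurable_snd (hκ.prodMap hκ), ← hγ₂, Measure.map_map hκ measurable_snd]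
    rfl
  · refine (lintegral_map_le _ _).trans (lintegral_mono fun p => ENNReal.ofReal_le_ofReal ?_)
    exact (dist_pi_le_iff dist_nonneg).2 fun k => dist_le_pi_dist p.1 p.2 (κ k)

lemma wass_self (μ : Measure (∀ i, E i)) : wass E μ μ = 0 := by
  have hdiag : Measurable fun x : ∀ i, E i => (x, x) := measurable_id.prodMk measurable_id
  refine nonpos_iff_eq_zero.1 (iInf₂_le_of_le (μ.map fun x => (x, x)) ⟨?_, ?_⟩ ?_)
  · rw [Measure.map_map measurable_fst hdiag]; exact Measure.map_id
  · rw [Measure.map_map measurable_snd hdiag]; exact Measure.map_id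
  · exact (lintegral_map_le _ _).trans (by simp)

lemma wass_comm (μ ν : Measure (∀ i, E i)) : wass E μ ν = wass E ν μ := by
  suffices ∀ μ ν : Measure (∀ i, E i), wass E ν μ ≤ wass E μ ν from
    le_antisymm (this ν μ) (this μ ν)
  intro μ ν
  refine le_iInf₂ fun γ ⟨hγ₁, hγ₂⟩ => iInf₂_le_of_le (γ.map Prod.swap) ⟨?_, ?_⟩ ?_
  · rwa [Measure.map_map measurable_fst measurable_swap]
  · rwa [Measure.map_map measurable_snd measurable_swap]
  · exact (lintegral_map_le _ _).trans (by simp [dist_comm])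

end Wasserstein

lemma measure_le_measure_thickening_add_cost {α : Type*} [PseudoMetricSpace α]
    [MeasurableSpace α] [OpensMeasurableSpace α] [SecondCountableTopology α]
    {μ ν : Measure α} {γ : Measure (α × α)} (hγ₁ : γ.map Prod.fst = μ)
    (hγ₂ : γ.map Prod.snd = ν) {C : Set α} (hC : MeasurableSet C) {r : ℝ} (hr : 0 < r) :
    μ C ≤ ν (Metric.thickening r C) +
      (∫⁻ p, ENNReal.ofReal (dist p.1 p.2) ∂γ) / ENNReal.ofReal r := by
  have hdist : Measurable fun p : α × α => ENNReal.ofReal (dist p.1 p.2) :=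
    ENNReal.measurable_ofReal.comp measurable_dist
  have hcover : Prod.fst ⁻¹' C ⊆ Prod.snd ⁻¹' Metric.thickening r C ∪
      {p : α × α | ENNReal.ofReal r ≤ ENNReal.ofReal (dist p.1 p.2)} := by
    intro p hp
    by_cases hd : dist p.1 p.2 < r
    · exact Or.inl (Metric.mem_thickening_iff.2 ⟨p.1, hp, by rwa [dist_comm]⟩)
    · exact Or.inr (ENNReal.ofReal_le_ofReal (not_lt.1 hd))
  calc μ C = γ (Prod.fst ⁻¹' C) := by rw [← hγ₁, Measure.map_apply measurable_fst hC]
    _ ≤ γ (Prod.snd ⁻¹' Metric.thickening r C) +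
        γ {p : α × α | ENNReal.ofReal r ≤ ENNReal.ofReal (dist p.1 p.2)} :=
      (measure_mono hcover).trans (measure_union_le _ _)
    _ ≤ _ := by
      gcongr
      · rw [← hγ₂, Measure.map_apply measurable_snd Metric.isOpen_thickening.measurableSet]
      · exact meas_ge_le_lintegral_div hdist.aemeasurable
          (ENNReal.ofReal_pos.2 hr).ne' ENNReal.ofReal_ne_top

section WassersteinBorel

variable {ι : Type*} [Fintype ι] {E : ι → Type*} [∀ i, MetricSpace (E i)]
  [∀ i, MeasurableSpace (E i)] [∀ i, BorelSpace (E i)] [∀ i, SecondCountableTopology (E i)]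

lemma measure_le_of_wass_eq_zero {μ ν : Measure (∀ i, E i)} [IsFiniteMeasure ν]
    (h : wass E μ ν = 0) {C : Set (∀ i, E i)} (hC : IsClosed C) : μ C ≤ ν C := by
  have hthick : ∀ r : ℝ, 0 < r → μ C ≤ ν (Metric.thickening r C) := by
    intro r hr
    refine ENNReal.le_of_forall_pos_le_add fun δ hδ _ => ?_
    have hε : wass E μ ν < δ * ENNReal.ofReal r := by
      rw [h]
      exact ENNReal.mul_pos (by exact_mod_cast hδ.ne') (ENNReal.ofReal_pos.2 hr).ne'
    simp only [wass, iInf_lt_iff] at hε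
    obtain ⟨γ, ⟨hγ₁, hγ₂⟩, hcost⟩ := hε
    refine (measure_le_measure_thickening_add_cost hγ₁ hγ₂ hC.measurableSet hr).trans ?_
    gcongr
    rw [ENNReal.div_le_iff (ENNReal.ofReal_pos.2 hr).ne' ENNReal.ofReal_ne_top]
    exact hcost.le
  exact ge_of_tendsto (tendsto_measure_thickening_of_isClosed
    ⟨1, one_pos, measure_ne_top ν _⟩ hC) (eventually_nhdsWithin_of_forall hthick)

lemma eq_of_wass_eq_zero {μ ν : Measure (∀ i, E i)} [IsFiniteMeasure ν]
    (h : wass E μ ν = 0) : μ = ν := by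
  have : IsFiniteMeasure μ :=
    ⟨(measure_le_of_wass_eq_zero h isClosed_univ).trans_lt (measure_lt_top ν _)⟩
  refine ext_of_generate_finite _
    (BorelSpace.measurable_eq.trans borel_eq_generateFrom_isClosed) isPiSystem_isClosed
    (fun C hC => ?_) ?_
  · exact (measure_le_of_wass_eq_zero h hC).antisymm
      (measure_le_of_wass_eq_zero ((wass_comm ν μ).trans h) hC)
  · exact (measure_le_of_wass_eq_zero h isClosed_univ).antisymm
      (measure_le_of_wass_eq_zero ((wass_comm ν μ).trans h) isClosed_univ)

end WassersteinBorel

section Reduction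

variable {A Val}

lemma red_comp {m p n : ℕ} (T : Fin n → A) (ι : Fin p → Fin n) (κ : Fin m → Fin p)
    (τ : Measure (∀ k, Val (T k))) :
    red A Val T (ι ∘ κ) τ = red A Val (T ∘ ι) κ (red A Val T ι τ) :=
  (Measure.map_map (measurable_pi_lambda _ fun k => measurable_pi_apply (κ k))
    (measurable_pi_lambda _ fun k => measurable_pi_apply (ι k))).symm

lemma Fin.exists_strictMono_succAbove_comp_eq {m n : ℕ} {κ : Fin m → Fin (n + 1)}
    (hκ : StrictMono κ) {i : Fin (n + 1)} (hi : i ∉ Set.range κ) :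
    ∃ κ' : Fin m → Fin n, StrictMono κ' ∧ i.succAbove ∘ κ' = κ := by
  choose κ' hκ' using fun k => Fin.exists_succAbove_eq fun h => hi ⟨k, h⟩
  refine ⟨κ', fun a b hab => ?_, funext hκ'⟩
  rw [← Fin.succAbove_lt_succAbove_iff (p := i), hκ' a, hκ' b]
  exact hκ hab

lemma red_mem_of_surjective {S : Set (DT A Val)} {n m : ℕ} {κ : Fin m → Fin n}
    (hκ : StrictMono κ) (hsurj : Function.Surjective κ) {T : Fin n → A}
    {σ : Measure (∀ k, Val (T k))} (hσ : ⟨n, T, σ⟩ ∈ S) : ⟨m, T ∘ κ, red A Val T κ σ⟩ ∈ S := by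
  obtain rfl := Fin.equiv_iff_eq.1 ⟨Equiv.ofBijective κ ⟨hκ.injective, hsurj⟩⟩
  obtain rfl := hκ.eq_id
  simpa [red] using hσ

theorem IsSubcomplex.red_mem {S : Set (DT A Val)} (hsub : IsSubcomplex A Val S) {n m : ℕ}
    {κ : Fin m → Fin n} (hκ : StrictMono κ) {T : Fin n → A} {σ : Measure (∀ k, Val (T k))}
    (hσ : ⟨n, T, σ⟩ ∈ S) : ⟨m, T ∘ κ, red A Val T κ σ⟩ ∈ S := by
  induction n generalizing m with
  | zero => exact red_mem_of_surjective hκ (fun i => i.elim0) hσ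
  | succ n ih =>
    by_cases hsurj : Function.Surjective κ
    · exact red_mem_of_surjective hκ hsurj hσ
    obtain ⟨i, hi⟩ := not_forall.1 hsurj
    obtain ⟨κ', hκ', rfl⟩ := Fin.exists_strictMono_succAbove_comp_eq hκ hi
    rw [red_comp]
    exact ih hκ' (hsub.1 n T σ i hσ)

lemma IsSubcomplex.exists_single_mem {S : Set (DT A Val)} (hsub : IsSubcomplex A Val S)
    (hcover : ∀ a : A, ∃ x ∈ S, ∃ i : Fin x.1, x.2.1 i = a) (a : A) :
    ∃ σ : Measure (Fin 1 → Val a), ⟨1, fun _ => a, σ⟩ ∈ S := by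
  obtain ⟨⟨n, T, τ⟩, hx, j, rfl⟩ := hcover a
  exact ⟨_, hsub.red_mem (Subsingleton.strictMono fun _ : Fin 1 => j) hx⟩

end Reduction

section ApproxJoins

variable {A Val} [∀ a, MetricSpace (Val a)] {S : Set (DT A Val)} {t : ℝ≥0∞}

def MarginalNear (S : Set (DT A Val)) (t : ℝ≥0∞) {n m : ℕ} (T : Fin n → A)
    (τ : Measure (∀ k, Val (T k))) (ι : Fin m → Fin n) : Prop :=
  ∃ σ : Measure (∀ k, Val (T (ι k))), ⟨m, T ∘ ι, σ⟩ ∈ S ∧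
    wass (fun k => Val (T (ι k))) (red A Val T ι τ) σ ≤ t

lemma MarginalNear.comp (hsub : IsSubcomplex A Val S) {n m p : ℕ} {T : Fin n → A}
    {τ : Measure (∀ k, Val (T k))} {ι : Fin p → Fin n} (h : MarginalNear S t T τ ι)
    {κ : Fin m → Fin p} (hκ : StrictMono κ) : MarginalNear S t T τ (ι ∘ κ) := by
  obtain ⟨σ, hσ, hw⟩ := h
  refine ⟨red A Val (T ∘ ι) κ σ, hsub.red_mem hκ hσ, ?_⟩
  rw [red_comp]
  exact (wass_map_restrict_le κ _ _).trans hw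

lemma marginalNear_red_iff {n n' m : ℕ} {T : Fin n → A} {τ : Measure (∀ k, Val (T k))}
    (φ : Fin n' → Fin n) {ι : Fin m → Fin n'} :
    MarginalNear S t (T ∘ φ) (red A Val T φ τ) ι ↔ MarginalNear S t T τ (φ ∘ ι) := by
  rw [MarginalNear, MarginalNear, red_comp]
  rfl

theorem mem_approxJoins_iff_forall_marginalNear_single (hsub : IsSubcomplex A Val S) {n : ℕ}
    {T : Fin n → A} {τ : Measure (∀ k, Val (T k))} :
    ⟨n, T, τ⟩ ∈ ApproxJoins A Val S t ↔ ∀ i, MarginalNear S t T τ (fun _ : Fin 1 => i) := by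
  refine ⟨fun h i => ?_, fun h i => ?_⟩
  · obtain ⟨m, ι, σ, -, ⟨j, rfl⟩, hσ, hw⟩ := h i
    exact MarginalNear.comp hsub ⟨σ, hσ, hw⟩ (Subsingleton.strictMono fun _ : Fin 1 => j)
  · obtain ⟨σ, hσ, hw⟩ := h i
    exact ⟨1, fun _ => i, σ, Subsingleton.strictMono _, ⟨0, rfl⟩, hσ, hw⟩

theorem red_mem_approxJoins (hsub : IsSubcomplex A Val S) {n m : ℕ} {T : Fin n → A}
    {τ : Measure (∀ k, Val (T k))} (φ : Fin m → Fin n) (h : ⟨n, T, τ⟩ ∈ ApproxJoins A Val S t) :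
    ⟨m, T ∘ φ, red A Val T φ τ⟩ ∈ ApproxJoins A Val S t := by
  rw [mem_approxJoins_iff_forall_marginalNear_single hsub] at h ⊢
  exact fun k => (marginalNear_red_iff φ).2 (h (φ k))

theorem mem_approxJoins_of_cover (hsub : IsSubcomplex A Val S) {n : ℕ} {T : Fin n → A}
    {τ : Measure (∀ k, Val (T k))}
    (h : ∀ k, ∃ (m : ℕ) (φ : Fin m → Fin n), k ∈ Set.range φ ∧
      ⟨m, T ∘ φ, red A Val T φ τ⟩ ∈ ApproxJoins A Val S t) :
    ⟨n, T, τ⟩ ∈ ApproxJoins A Val S t := by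
  rw [mem_approxJoins_iff_forall_marginalNear_single hsub]
  intro k
  obtain ⟨m, φ, ⟨j, rfl⟩, hφ⟩ := h k
  exact (marginalNear_red_iff φ).1 ((mem_approxJoins_iff_forall_marginalNear_single hsub).1 hφ j)

theorem isSubcomplex_approxJoins (hsub : IsSubcomplex A Val S) :
    IsSubcomplex A Val (ApproxJoins A Val S t) :=
  ⟨fun _ _ _ i h => red_mem_approxJoins hsub i.succAbove h,
    fun _ _ _ i h => red_mem_approxJoins hsub i.predAbove h⟩

theorem strongJoinCondition_approxJoins (hsub : IsSubcomplex A Val S) :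
    StrongJoinCondition A Val (ApproxJoins A Val S t) := by
  intro n0 n01 n02 n012 ι01 ι02 _ _ M T012 τ01 τ02 h01 h02 _ τ012 hr01 hr02
  subst hr01 hr02
  refine mem_approxJoins_of_cover hsub fun k => ?_
  rcases M.cover.symm ▸ Set.mem_univ k with hk | hk
  · exact ⟨n01, M.μ01, hk, h01⟩
  · exact ⟨n02, M.μ02, hk, h02⟩

theorem approxJoins_mono {t₁ t₂ : ℝ≥0∞} (ht : t₁ ≤ t₂) :
    ApproxJoins A Val S t₁ ⊆ ApproxJoins A Val S t₂ := fun _ hx i =>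
  let ⟨m, ι, σ, hι, hi, hσ, hw⟩ := hx i
  ⟨m, ι, σ, hι, hi, hσ, hw.trans ht⟩

lemma marginalNear_zero_iff [∀ a, BorelSpace (Val a)] [∀ a, SecondCountableTopology (Val a)]
    (hfin : ∀ x ∈ S, IsFiniteMeasure x.2.2) {n m : ℕ} {T : Fin n → A}
    {τ : Measure (∀ k, Val (T k))} {ι : Fin m → Fin n} :
    MarginalNear S 0 T τ ι ↔ ⟨m, T ∘ ι, red A Val T ι τ⟩ ∈ S := by
  refine ⟨fun ⟨σ, hσ, hw⟩ => ?_, fun h => ⟨_, h, (wass_self _).le⟩⟩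
  have : IsFiniteMeasure σ := hfin _ hσ
  rwa [eq_of_wass_eq_zero (nonpos_iff_eq_zero.1 hw)]

theorem approxJoins_zero [∀ a, BorelSpace (Val a)] [∀ a, SecondCountableTopology (Val a)]
    (hfin : ∀ x ∈ S, IsFiniteMeasure x.2.2) :
    ApproxJoins A Val S 0 = PerfectJoins A Val S := by
  ext x
  refine forall_congr' fun i => ⟨fun ⟨m, ι, σ, hι, hi, hσ, hw⟩ => ?_, fun ⟨m, ι, hι, hi, h⟩ => ?_⟩
  · exact ⟨m, ι, hι, hi, (marginalNear_zero_iff hfin).1 ⟨σ, hσ, hw⟩⟩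
  · obtain ⟨σ, hσ, hw⟩ := (marginalNear_zero_iff hfin).2 h
    exact ⟨m, ι, σ, hι, hi, hσ, hw⟩

theorem approxJoins_top (hsub : IsSubcomplex A Val S)
    (hcover : ∀ a : A, ∃ x ∈ S, ∃ i : Fin x.1, x.2.1 i = a) :
    ApproxJoins A Val S ⊤ = Set.univ := by
  refine Set.eq_univ_of_forall fun ⟨n, T, τ⟩ =>
    (mem_approxJoins_iff_forall_marginalNear_single hsub).2 fun i => ?_
  obtain ⟨σ, hσ⟩ := hsub.exists_single_mem hcover (T i)
  exact ⟨σ, hσ, le_top⟩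

end ApproxJoins

theorem approx_joins_filtration
    [∀ a, MetricSpace (Val a)] [∀ a, CompactSpace (Val a)]
    [∀ a, BorelSpace (Val a)]
    (S : Set (DT A Val)) (hsub : IsSubcomplex A Val S)
    (hfin : ∀ x ∈ S, IsFiniteMeasure x.2.2)
    (hcover : ∀ a : A, ∃ x ∈ S, ∃ i : Fin x.1, x.2.1 i = a) :
    (∀ t : ℝ≥0∞, IsSubcomplex A Val (ApproxJoins A Val S t) ∧
        StrongJoinCondition A Val (ApproxJoins A Val S t)) ∧
    (∀ t₁ t₂ : ℝ≥0∞, t₁ ≤ t₂ → ApproxJoins A Val S t₁ ⊆ ApproxJoins A Val S t₂) ∧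
    ApproxJoins A Val S 0 = PerfectJoins A Val S ∧
    ApproxJoins A Val S ⊤ = Set.univ :=
  ⟨fun _ => ⟨isSubcomplex_approxJoins hsub, strongJoinCondition_approxJoins hsub⟩,
    fun _ _ => approxJoins_mono, approxJoins_zero hfin, approxJoins_top hsub hcover⟩
end
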